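/- arXiv:2507.01350 — 4 statements merged into one kernel-verified Lean document; each statement's English description precedes it below -/
import Mathlib

section
/- For positive reals s_1,...,s_n and parameters M, N, m, n', k > 0 with k·m < 1 and k·n' > 1, letting s̄ = (1/n)∑ s_i denote the average, the inequality s̄·(M·s̄^m + N·s̄^{n'})^k ≤ (1/n)∑_{i=1}^n s_i·(M·s_i^m + N·s_i^{n'})^k holds. -/
open Finset

private lemma aux_pos (a b k u v : ℝ) (hu : 0 < u) (hv : 0 < v) (hk : 0 < k)
    (hka : 1 < k * a) (hkb : 1 < k * b) :
    0 < (a * (a - 1) * u + b * (b - 1) * v) * (u + v) + (k - 1) * (a * u + b * v) ^ 2 := by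
  have ha : 0 < a := by nlinarith
  have hb : 0 < b := by nlinarith
  have hid : (a * (a - 1) * u + b * (b - 1) * v) * (u + v) + (k - 1) * (a * u + b * v) ^ 2
      = a * (k * a - 1) * u ^ 2 + b * (k * b - 1) * v ^ 2
        + ((a - b) ^ 2 + a * (k * b - 1) + b * (k * a - 1)) * (u * v) := by ring
  rw [hid]
  have hka' : 0 < k * a - 1 := by linarith
  have hkb' : 0 < k * b - 1 := by linarith
  have h1 : 0 < a * (k * a - 1) * u ^ 2 := by positivity
  have h2 : 0 < b * (k * b - 1) * v ^ 2 := by positivity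
  have h3 : 0 < ((a - b) ^ 2 + a * (k * b - 1) + b * (k * a - 1)) * (u * v) := by
    have : 0 < a * (k * b - 1) := by positivity
    have : 0 < b * (k * a - 1) := by positivity
    nlinarith [sq_nonneg (a - b), mul_pos hu hv]
  linarith

/-- Jensen-type inequality: for positive reals `s 1, …, s n` and `M, N, m, n', k > 0`
with `k*m < 1` and `k*n' > 1`, letting `s̄` denote the average,
`s̄ (M s̄^m + N s̄^{n'})^k ≤ (1/n) ∑ i, s i (M (s i)^m + N (s i)^{n'})^k`. -/
theorem jensen_type (n : ℕ) (hn : 0 < n) (s : Fin n → ℝ) (hs : ∀ i, 0 < s i)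
    (M N m n' k : ℝ) (hM : 0 < M) (hN : 0 < N) (hm : 0 < m) (hn' : 0 < n') (hk : 0 < k)
    (hkm : k * m < 1) (hkn : 1 < k * n') :
    ((∑ i, s i) / n) * (M * ((∑ i, s i) / n) ^ m + N * ((∑ i, s i) / n) ^ n') ^ k ≤
      (∑ i, s i * (M * (s i) ^ m + N * (s i) ^ n') ^ k) / n := by
  have hk0 : k ≠ 0 := hk.ne'
  set a : ℝ := m + 1/k with hadef
  set b : ℝ := n' + 1/k with hbdef
  have hka : 1 < k * a := by rw [hadef]; field_simp; nlinarith
  have hkb : 1 < k * b := by rw [hbdef]; field_simp; nlinarith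
  set φ : ℝ → ℝ := fun x => M * x ^ a + N * x ^ b with hφdef
  set g : ℝ → ℝ := fun x => φ x ^ k with hgdef
  have hφpos : ∀ x : ℝ, 0 < x → 0 < φ x := by
    intro x hx
    have := Real.rpow_pos_of_pos hx a
    have := Real.rpow_pos_of_pos hx b
    simp only [hφdef]; nlinarith
  set ψ : ℝ → ℝ := fun x => M * (a * x ^ (a-1)) + N * (b * x ^ (b-1)) with hψdef
  have hφd : ∀ x : ℝ, 0 < x → HasDerivAt φ (ψ x) x := by
    intro x hx
    exact ((Real.hasDerivAt_rpow_const (Or.inl hx.ne')).const_mul M).add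
      ((Real.hasDerivAt_rpow_const (Or.inl hx.ne')).const_mul N)
  have hg : ∀ x : ℝ, 0 < x → HasDerivAt g (ψ x * k * φ x ^ (k-1)) x := by
    intro x hx
    exact (hφd x hx).rpow_const (Or.inl (hφpos x hx).ne')
  set g1 : ℝ → ℝ := fun x => ψ x * k * φ x ^ (k-1) with hg1def
  set ψ' : ℝ → ℝ := fun x =>
    M * (a * ((a-1) * x ^ (a-1-1))) + N * (b * ((b-1) * x ^ (b-1-1))) with hψ'def
  have hψd : ∀ x : ℝ, 0 < x → HasDerivAt ψ (ψ' x) x := by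
    intro x hx
    exact (((Real.hasDerivAt_rpow_const (p := a-1) (Or.inl hx.ne')).const_mul a).const_mul M).add
      (((Real.hasDerivAt_rpow_const (p := b-1) (Or.inl hx.ne')).const_mul b).const_mul N)
  set g2 : ℝ → ℝ := fun x =>
    ψ' x * k * φ x ^ (k-1) + ψ x * k * (ψ x * (k-1) * φ x ^ (k-1-1)) with hg2def
  have hg1 : ∀ x : ℝ, 0 < x → HasDerivAt g1 (g2 x) x := by
    intro x hx
    have h1 : HasDerivAt (fun x => ψ x * k) (ψ' x * k) x := (hψd x hx).mul_const k
    have h2 : HasDerivAt (fun x => φ x ^ (k-1)) (ψ x * (k-1) * φ x ^ (k-1-1)) x :=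
      (hφd x hx).rpow_const (Or.inl (hφpos x hx).ne')
    exact h1.mul h2
  have h2eq : ∀ x ∈ Set.Ioi (0:ℝ), deriv^[2] g x = g2 x := by
    intro x hx
    have hev : deriv g =ᶠ[nhds x] g1 :=
      Filter.eventuallyEq_of_mem (Ioi_mem_nhds hx) (fun y hy => (hg y hy).deriv)
    show deriv (deriv g) x = g2 x
    rw [Filter.EventuallyEq.deriv_eq hev]
    exact (hg1 x hx).deriv
  have h2pos : ∀ x ∈ Set.Ioi (0:ℝ), 0 < deriv^[2] g x := by
    intro x hx
    rw [h2eq x hx]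
    have hx0 : (0:ℝ) < x := hx
    set u : ℝ := M * x ^ a with hu
    set v : ℝ := N * x ^ b with hv
    have hupos : 0 < u := by positivity
    have hvpos : 0 < v := by positivity
    have hxa1 : x ^ (a-1) = x ^ a / x := by
      rw [Real.rpow_sub hx0, Real.rpow_one]
    have hxb1 : x ^ (b-1) = x ^ b / x := by
      rw [Real.rpow_sub hx0, Real.rpow_one]
    have hxa2 : x ^ (a-1-1) = x ^ a / x / x := by
      rw [Real.rpow_sub hx0, Real.rpow_one, hxa1]
    have hxb2 : x ^ (b-1-1) = x ^ b / x / x := by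
      rw [Real.rpow_sub hx0, Real.rpow_one, hxb1]
    have hφsplit : φ x ^ (k-1) = φ x ^ (k-1-1) * φ x := by
      have h := Real.rpow_add_one (hφpos x hx0).ne' (k-1-1)
      rw [show k-1-1+1 = k-1 by ring] at h
      exact h
    have hE : 0 < (a * (a-1) * u + b * (b-1) * v) * (u + v) + (k-1) * (a * u + b * v) ^ 2 :=
      aux_pos a b k u v hupos hvpos hk hka hkb
    have hψx : ψ x = (a * u + b * v) / x := by
      simp only [hψdef, hxa1, hxb1, hu, hv]; ring
    have hψ'x : ψ' x = (a * (a-1) * u + b * (b-1) * v) / x / x := by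
      simp only [hψ'def, hxa2, hxb2, hu, hv]; ring
    have hφx : φ x = u + v := rfl
    have hgoal : g2 x = k * φ x ^ (k-1-1) *
        (((a * (a-1) * u + b * (b-1) * v) * (u + v) + (k-1) * (a * u + b * v) ^ 2) / (x*x)) := by
      simp only [hg2def, hφsplit, hψx, hψ'x, hφx]
      rw [show (u + v) ^ (k-1) = (u + v) ^ (k-1-1) * (u + v) from hφsplit]
      generalize (u + v) ^ (k-1-1) = P
      field_simp
    rw [hgoal]
    have h1 : 0 < φ x ^ (k-1-1) := Real.rpow_pos_of_pos (hφpos x hx0) _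
    positivity
  have hconv : ConvexOn ℝ (Set.Ioi 0) g := by
    refine (strictConvexOn_of_deriv2_pos (convex_Ioi 0) ?_ ?_).convexOn
    · exact fun x hx => ((hg x hx).continuousAt).continuousWithinAt
    · rwa [interior_Ioi]
  -- relate g to the original function
  have hgf : ∀ x : ℝ, 0 < x → g x = x * (M * x ^ m + N * x ^ n') ^ k := by
    intro x hx
    have hxk : (0:ℝ) < x ^ (1/k) := Real.rpow_pos_of_pos hx _
    have hφx : φ x = x ^ (1/k) * (M * x ^ m + N * x ^ n') := by
      simp only [hφdef, hadef, hbdef, Real.rpow_add hx]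
      ring
    have hc : 0 < M * x ^ m + N * x ^ n' := by
      have := Real.rpow_pos_of_pos hx m
      have := Real.rpow_pos_of_pos hx n'
      nlinarith
    simp only [hgdef, hφx]
    rw [Real.mul_rpow hxk.le hc.le, ← Real.rpow_mul hx.le, one_div,
      inv_mul_cancel₀ hk0, Real.rpow_one]
  -- Jensen
  have hn0 : (0:ℝ) < (n:ℝ) := by exact_mod_cast hn
  have hw0 : ∀ i ∈ Finset.univ (α := Fin n), (0:ℝ) ≤ (n:ℝ)⁻¹ := fun _ _ => by positivity
  have hw1 : ∑ _i : Fin n, (n:ℝ)⁻¹ = 1 := by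
    simp [Finset.sum_const, Finset.card_univ]
    field_simp
  have hmem : ∀ i ∈ Finset.univ (α := Fin n), s i ∈ Set.Ioi (0:ℝ) := fun i _ => hs i
  have hjen := hconv.map_sum_le hw0 hw1 hmem
  have havg : ∑ i : Fin n, (n:ℝ)⁻¹ • s i = (∑ i, s i) / n := by
    rw [← Finset.smul_sum]; simp [smul_eq_mul, div_eq_inv_mul]
  rw [havg] at hjen
  have hbar : 0 < (∑ i, s i) / n := by
    have : 0 < ∑ i, s i := Finset.sum_pos (fun i _ => hs i) ⟨⟨0, hn⟩, Finset.mem_univ _⟩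
    positivity
  calc ((∑ i, s i) / n) * (M * ((∑ i, s i) / n) ^ m + N * ((∑ i, s i) / n) ^ n') ^ k
      = g ((∑ i, s i) / n) := (hgf _ hbar).symm
    _ ≤ ∑ i, (n:ℝ)⁻¹ • g (s i) := hjen
    _ = (∑ i, s i * (M * (s i) ^ m + N * (s i) ^ n') ^ k) / n := by
        simp only [smul_eq_mul, ← Finset.mul_sum]
        rw [div_eq_inv_mul]
        congr 1
        exact Finset.sum_congr rfl (fun i _ => hgf (s i) (hs i))
end

section
/- Consider minimizing J(a_z, a_y) = max{|a_z/c_z|, |a_y/c_y|} subject to b_z·a_z + b_y·a_y = U with b_z, b_y ≠ 0, c_z, c_y > 0, and let c = c_y/c_z. If b_z/b_y < 0, the point (U/(b_z − c·b_y), −c·U/(b_z − c·b_y)) attains the minimum of J on the constraint set; if b_z/b_y > 0, the point (U/(b_z + c·b_y), c·U/(b_z + c·b_y)) attains the minimum. -/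
lemma linf_aux (cz cy U d : ℝ) (hcz : cz ≠ 0) (hcy : cy ≠ 0) (hd : d ≠ 0) :
    (cy / cz) * U / d / cy = U / d / cz := by
  rw [div_div, div_div, div_eq_div_iff (mul_ne_zero hd hcy) (mul_ne_zero hd hcz)]
  field_simp

/-- Minimizing `J(a_z, a_y) = max{|a_z/c_z|, |a_y/c_y|}` subject to `b_z a_z + b_y a_y = U`,
with `c = c_y/c_z`: if `b_z/b_y < 0` the point `(U/(b_z − c b_y), −c U/(b_z − c b_y))`
attains the minimum; if `b_z/b_y > 0` the point `(U/(b_z + c b_y), c U/(b_z + c b_y))`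
attains the minimum. -/
theorem linf_allocation (bz by' cz cy U : ℝ) (hbz : bz ≠ 0) (hby : by' ≠ 0)
    (hcz : 0 < cz) (hcy : 0 < cy) :
    (bz / by' < 0 →
      (bz * (U / (bz - (cy / cz) * by')) + by' * (-(cy / cz) * U / (bz - (cy / cz) * by')) = U ∧
        ∀ az ay : ℝ, bz * az + by' * ay = U →
          max |(U / (bz - (cy / cz) * by')) / cz|
              |(-(cy / cz) * U / (bz - (cy / cz) * by')) / cy|
            ≤ max |az / cz| |ay / cy|)) ∧
    (0 < bz / by' →
      (bz * (U / (bz + (cy / cz) * by')) + by' * ((cy / cz) * U / (bz + (cy / cz) * by')) = U ∧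
        ∀ az ay : ℝ, bz * az + by' * ay = U →
          max |(U / (bz + (cy / cz) * by')) / cz|
              |((cy / cz) * U / (bz + (cy / cz) * by')) / cy|
            ≤ max |az / cz| |ay / cy|)) := by
  have hcz' : cz ≠ 0 := ne_of_gt hcz
  have hcy' : cy ≠ 0 := ne_of_gt hcy
  have hbound : ∀ az ay : ℝ, bz * az + by' * ay = U →
      |U| ≤ (|bz| * cz + |by'| * cy) * max |az / cz| |ay / cy| := by
    intro az ay hfeas
    set M := max |az / cz| |ay / cy| with hMdef
    have haz : |az| ≤ cz * M := by
      have h1 : |az / cz| ≤ M := le_max_left _ _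
      rw [abs_div, abs_of_pos hcz, div_le_iff₀ hcz] at h1
      linarith
    have hay : |ay| ≤ cy * M := by
      have h1 : |ay / cy| ≤ M := le_max_right _ _
      rw [abs_div, abs_of_pos hcy, div_le_iff₀ hcy] at h1
      linarith
    calc |U| = |bz * az + by' * ay| := by rw [hfeas]
      _ ≤ |bz * az| + |by' * ay| := abs_add_le _ _
      _ = |bz| * |az| + |by'| * |ay| := by rw [abs_mul, abs_mul]
      _ ≤ |bz| * (cz * M) + |by'| * (cy * M) := by
          gcongr <;> exact abs_nonneg _
      _ = (|bz| * cz + |by'| * cy) * M := by ring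
  constructor
  · intro hneg
    have hprod : bz * by' < 0 := by
      rcases div_neg_iff.mp hneg with ⟨h1, h2⟩ | ⟨h1, h2⟩ <;> nlinarith
    have habs : |bz - (cy / cz) * by'| = |bz| + (cy / cz) * |by'| := by
      rcases lt_or_gt_of_ne hbz with h | h
      · have hby2 : 0 < by' := by nlinarith
        rw [abs_of_neg (by nlinarith [div_pos hcy hcz] : bz - (cy / cz) * by' < 0),
          abs_of_neg h, abs_of_pos hby2]; try ring
      · have hby2 : by' < 0 := by nlinarith
        rw [abs_of_pos (by nlinarith [div_pos hcy hcz] : 0 < bz - (cy / cz) * by'),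
          abs_of_pos h, abs_of_neg hby2]; try ring
    have hdpos : 0 < |bz - (cy / cz) * by'| := by
      rw [habs]
      have : 0 ≤ (cy / cz) * |by'| := by positivity
      linarith [abs_pos.mpr hbz]
    have hd : bz - (cy / cz) * by' ≠ 0 := abs_pos.mp hdpos
    constructor
    · calc bz * (U / (bz - (cy / cz) * by')) + by' * (-(cy / cz) * U / (bz - (cy / cz) * by'))
          = (bz - (cy / cz) * by') * U / (bz - (cy / cz) * by') := by ring
        _ = U := mul_div_cancel_left₀ U hd
    · intro az ay hfeas
      have he : (-(cy / cz) * U / (bz - (cy / cz) * by')) / cy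
          = -((U / (bz - (cy / cz) * by')) / cz) := by
        calc (-(cy / cz) * U / (bz - (cy / cz) * by')) / cy
            = -((cy / cz) * U / (bz - (cy / cz) * by') / cy) := by ring
          _ = -((U / (bz - (cy / cz) * by')) / cz) := by
              rw [linf_aux cz cy U _ hcz' hcy' hd]
      rw [he, abs_neg, max_self]
      have hU := hbound az ay hfeas
      rw [abs_div, abs_div, abs_of_pos hcz, habs]
      rw [div_div, div_le_iff₀ (by positivity)]
      have hkey : (|bz| + cy / cz * |by'|) * cz = |bz| * cz + |by'| * cy := by
        field_simp
        try ring
      calc |U| ≤ (|bz| * cz + |by'| * cy) * max |az / cz| |ay / cy| := hU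
        _ = max |az / cz| |ay / cy| * ((|bz| + cy / cz * |by'|) * cz) := by rw [hkey]; try ring
  · intro hpos
    have hprod : 0 < bz * by' := by
      rcases div_pos_iff.mp hpos with ⟨h1, h2⟩ | ⟨h1, h2⟩ <;> nlinarith
    have habs : |bz + (cy / cz) * by'| = |bz| + (cy / cz) * |by'| := by
      rcases lt_or_gt_of_ne hbz with h | h
      · have hby2 : by' < 0 := by nlinarith
        rw [abs_of_neg (by nlinarith [div_pos hcy hcz] : bz + (cy / cz) * by' < 0),
          abs_of_neg h, abs_of_neg hby2]; try ring
      · have hby2 : 0 < by' := by nlinarith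
        rw [abs_of_pos (by nlinarith [div_pos hcy hcz] : 0 < bz + (cy / cz) * by'),
          abs_of_pos h, abs_of_pos hby2]; try ring
    have hdpos : 0 < |bz + (cy / cz) * by'| := by
      rw [habs]
      have : 0 ≤ (cy / cz) * |by'| := by positivity
      linarith [abs_pos.mpr hbz]
    have hd : bz + (cy / cz) * by' ≠ 0 := abs_pos.mp hdpos
    constructor
    · calc bz * (U / (bz + (cy / cz) * by')) + by' * ((cy / cz) * U / (bz + (cy / cz) * by'))
          = (bz + (cy / cz) * by') * U / (bz + (cy / cz) * by') := by ring
        _ = U := mul_div_cancel_left₀ U hd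
    · intro az ay hfeas
      have he : ((cy / cz) * U / (bz + (cy / cz) * by')) / cy
          = (U / (bz + (cy / cz) * by')) / cz :=
        linf_aux cz cy U _ hcz' hcy' hd
      rw [he, max_self]
      have hU := hbound az ay hfeas
      rw [abs_div, abs_div, abs_of_pos hcz, habs]
      rw [div_div, div_le_iff₀ (by positivity)]
      have hkey : (|bz| + cy / cz * |by'|) * cz = |bz| * cz + |by'| * cy := by
        field_simp
        try ring
      calc |U| ≤ (|bz| * cz + |by'| * cy) * max |az / cz| |ay / cy| := hU
        _ = max |az / cz| |ay / cy| * ((|bz| + cy / cz * |by'|) * cz) := by rw [hkey]; try ring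
end

section
/- Predefined-time stability comparison lemma: let V : [0,∞) → [0,∞) be absolutely continuous with V̇(t) ≤ −(1/T_s)·Ψ(V(t)) whenever V(t) > 0, where Ψ(ℓ) = 1/φ(ℓ) for a continuous function φ : (0,∞) → (0,∞) satisfying ∫₀^∞ φ(ℓ) dℓ = 1. Then V(t) = 0 for all t ≥ t₀ + T_s. -/
open MeasureTheory

/-- Predefined-time stability comparison lemma: if `V ≥ 0` is differentiable with
`V̇(t) ≤ −(1/T_s)·Ψ(V(t))` whenever `V(t) > 0`, where `Ψ(ℓ) = 1/φ(ℓ)` for a continuous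
positive `φ` on `(0,∞)` with `∫₀^∞ φ = 1`, then `V(t) = 0` for all `t ≥ t₀ + T_s`. -/
theorem predefined_time_comparison (Ts t0 : ℝ) (hTs : 0 < Ts)
    (φ : ℝ → ℝ) (V V' : ℝ → ℝ)
    (hφc : ContinuousOn φ (Set.Ioi 0))
    (hφpos : ∀ l : ℝ, 0 < l → 0 < φ l)
    (hφint : ∫ l in Set.Ioi (0 : ℝ), φ l = 1)
    (hVnonneg : ∀ t, 0 ≤ V t)
    (hVderiv : ∀ t, t ≥ t0 → HasDerivAt V (V' t) t)
    (hcmp : ∀ t, t ≥ t0 → 0 < V t → V' t ≤ -(1 / Ts) * (1 / φ (V t))) :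
    ∀ t, t ≥ t0 + Ts → V t = 0 := by
  -- φ is integrable on (0,∞)
  have hInt : IntegrableOn φ (Set.Ioi (0:ℝ)) := by
    by_contra h
    rw [integral_undef h] at hφint
    norm_num at hφint
  set G : ℝ → ℝ := fun x => ∫ l in Set.Ioc (0:ℝ) x, φ l with hG
  have hae : 0 ≤ᵐ[volume.restrict (Set.Ioi (0:ℝ))] φ :=
    (ae_restrict_iff' measurableSet_Ioi).2 (ae_of_all _ fun l hl => (hφpos l hl).le)
  have hGle1 : ∀ x, G x ≤ 1 := by
    intro x
    calc G x ≤ ∫ l in Set.Ioi (0:ℝ), φ l := by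
          apply setIntegral_mono_set hInt hae
          exact (Set.Ioc_subset_Ioi_self).eventuallyLE
      _ = 1 := hφint
  have hIoc : ∀ x : ℝ, IntegrableOn φ (Set.Ioc 0 x) :=
    fun x => hInt.mono_set Set.Ioc_subset_Ioi_self
  have hII : ∀ a x : ℝ, 0 < a → 0 < x → IntervalIntegrable φ volume a x := by
    intro a x ha hx
    apply (hInt.mono_set _).intervalIntegrable
    intro l hl
    exact lt_of_lt_of_le (lt_min ha hx) hl.1
  have hGpos : ∀ x : ℝ, 0 < x → 0 < G x := by
    intro x hx
    have hsplit : G x = (∫ l in Set.Ioc (0:ℝ) (x/2), φ l) + ∫ l in Set.Ioc (x/2) x, φ l := by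
      rw [hG]
      rw [← setIntegral_union (Set.Ioc_disjoint_Ioc_of_le le_rfl) measurableSet_Ioc (hIoc _)
        (hInt.mono_set (Set.Ioc_subset_Ioi_self.trans (Set.Ioi_subset_Ioi (by linarith))))]
      rw [Set.Ioc_union_Ioc_eq_Ioc (by linarith) (by linarith)]
    rw [hsplit]
    have h1 : 0 ≤ ∫ l in Set.Ioc (0:ℝ) (x/2), φ l :=
      setIntegral_nonneg measurableSet_Ioc fun l hl => (hφpos l hl.1).le
    have h2 : 0 < ∫ l in Set.Ioc (x/2) x, φ l := by
      rw [← intervalIntegral.integral_of_le (by linarith)]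
      apply intervalIntegral.intervalIntegral_pos_of_pos_on (hII _ _ (by linarith) hx)
      · intro l hl
        exact hφpos l (by linarith [hl.1])
      · linarith
    linarith
  have hGderiv : ∀ x : ℝ, 0 < x → HasDerivAt G (φ x) x := by
    intro x hx
    have ha : (0:ℝ) < x/2 := by linarith
    have key : ∀ u ∈ Set.Ioi (x/2), G u = G (x/2) + ∫ l in (x/2)..u, φ l := by
      intro u hu
      have hu' : x/2 ≤ u := le_of_lt hu
      rw [intervalIntegral.integral_of_le hu', hG]
      rw [← setIntegral_union (Set.Ioc_disjoint_Ioc_of_le le_rfl) measurableSet_Ioc (hIoc _)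
        (hInt.mono_set (Set.Ioc_subset_Ioi_self.trans (Set.Ioi_subset_Ioi ha.le)))]
      rw [Set.Ioc_union_Ioc_eq_Ioc ha.le hu']
    have hd : HasDerivAt (fun u => G (x/2) + ∫ l in (x/2)..u, φ l) (φ x) x := by
      apply HasDerivAt.const_add
      apply intervalIntegral.integral_hasDerivAt_right (hII _ _ ha hx)
      · exact hφc.stronglyMeasurableAtFilter isOpen_Ioi x hx
      · exact hφc.continuousAt (Ioi_mem_nhds hx)
    apply hd.congr_of_eventuallyEq
    exact Filter.eventually_of_mem (Ioi_mem_nhds (by linarith : x/2 < x)) key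
  -- V' ≤ 0 on [t0, ∞)
  have hV'le : ∀ t, t ≥ t0 → V' t ≤ 0 := by
    intro t ht
    rcases lt_or_eq_of_le (hVnonneg t) with hpos | hzero
    · have h := hcmp t ht hpos
      have hφp := hφpos _ hpos
      nlinarith [one_div_pos.mpr hφp, one_div_pos.mpr hTs]
    · have hmin : IsLocalMin V t :=
        Filter.Eventually.of_forall fun s => by rw [← hzero]; exact hVnonneg s
      exact le_of_eq (hmin.hasDerivAt_eq_zero (hVderiv t ht))
  -- V is antitone on [t0, ∞)
  have hanti : AntitoneOn V (Set.Ici t0) := by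
    apply antitoneOn_of_deriv_nonpos (convex_Ici t0)
    · exact fun s hs => ((hVderiv s hs).continuousAt).continuousWithinAt
    · intro s hs
      rw [interior_Ici] at hs
      exact ((hVderiv s (le_of_lt hs)).differentiableAt).differentiableWithinAt
    · intro s hs
      rw [interior_Ici] at hs
      rw [(hVderiv s hs.le).deriv]
      exact hV'le s hs.le
  -- Main argument
  intro t ht
  by_contra hne
  have hVt : 0 < V t := lt_of_le_of_ne (hVnonneg t) (Ne.symm hne)
  have ht0t : t0 < t := by linarith
  have hVpos : ∀ s ∈ Set.Icc t0 t, 0 < V s := by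
    intro s hs
    exact lt_of_lt_of_le hVt (hanti hs.1 ht0t.le hs.2)
  -- F s = G (V s) + s / Ts is antitone on [t0, t]
  set F : ℝ → ℝ := fun s => G (V s) + s / Ts with hF
  have hFderiv : ∀ s ∈ Set.Icc t0 t, HasDerivAt F (φ (V s) * V' s + 1 / Ts) s := by
    intro s hs
    have h1 : HasDerivAt (fun u => G (V u)) (φ (V s) * V' s) s :=
      (hGderiv (V s) (hVpos s hs)).comp s (hVderiv s hs.1)
    have h2 : HasDerivAt (fun u : ℝ => u / Ts) (1 / Ts) s := by
      simpa using (hasDerivAt_id s).div_const Ts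
    exact h1.add h2
  have hFanti : AntitoneOn F (Set.Icc t0 t) := by
    apply antitoneOn_of_deriv_nonpos (convex_Icc t0 t)
    · exact fun s hs => (hFderiv s hs).continuousAt.continuousWithinAt
    · intro s hs
      rw [interior_Icc] at hs
      exact (hFderiv s (Set.Ioo_subset_Icc_self hs)).differentiableAt.differentiableWithinAt
    · intro s hs
      rw [interior_Icc] at hs
      have hs' := Set.Ioo_subset_Icc_self hs
      rw [(hFderiv s hs').deriv]
      have hp := hφpos _ (hVpos s hs')
      have hc := hcmp s hs'.1 (hVpos s hs')
      have : φ (V s) * V' s ≤ φ (V s) * (-(1 / Ts) * (1 / φ (V s))) :=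
        mul_le_mul_of_nonneg_left hc hp.le
      have heq : φ (V s) * (-(1 / Ts) * (1 / φ (V s))) = -(1/Ts) := by
        field_simp
      linarith [heq ▸ this]
  have hFt : F t ≤ F t0 := hFanti (Set.left_mem_Icc.mpr ht0t.le) (Set.right_mem_Icc.mpr ht0t.le) ht0t.le
  have h1 : G (V t) + t / Ts ≤ G (V t0) + t0 / Ts := hFt
  have h2 : G (V t0) ≤ 1 := hGle1 _
  have h3 : 0 < G (V t) := hGpos _ hVt
  have h4 : (t - t0) / Ts ≥ 1 := by
    rw [ge_iff_le, le_div_iff₀ hTs]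
    linarith
  have : t / Ts - t0 / Ts = (t - t0) / Ts := by ring
  linarith
end

section
/- Gamma-function settling-time identity: for M, N, m, n', k > 0 with k·m < 1 and k·n' > 1, the improper integral ∫₀^∞ dv / (M·v^m + N·v^{n'})^k equals (M/N)^{(1−km)/(n'−m)} · Γ((1−km)/(n'−m)) · Γ((kn'−1)/(n'−m)) / (M^k · Γ(k) · (n'−m)). -/
open Real MeasureTheory

open Set in

lemma beta_real {a b : ℝ} (ha : 0 < a) (hb : 0 < b) :
    ∫ t in (0:ℝ)..1, t ^ (a - 1) * (1 - t) ^ (b - 1)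
      = Real.Gamma a * Real.Gamma b / Real.Gamma (a + b) := by
  have h := Complex.Gamma_mul_Gamma_eq_betaIntegral (s := (a:ℂ)) (t := (b:ℂ))
    (by simpa using ha) (by simpa using hb)
  have hβ : Complex.betaIntegral a b
      = ((∫ t in (0:ℝ)..1, t ^ (a - 1) * (1 - t) ^ (b - 1) : ℝ) : ℂ) := by
    rw [Complex.betaIntegral, ← intervalIntegral.integral_ofReal]
    refine intervalIntegral.integral_congr fun x hx => ?_
    rw [Set.uIcc_of_le (by norm_num : (0:ℝ) ≤ 1)] at hx
    rw [Complex.ofReal_mul, Complex.ofReal_cpow hx.1, Complex.ofReal_cpow (by linarith [hx.2] : (0:ℝ) ≤ 1 - x)]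
    push_cast
    ring
  rw [hβ, ← Complex.ofReal_add, Complex.Gamma_ofReal, Complex.Gamma_ofReal,
    Complex.Gamma_ofReal, ← Complex.ofReal_mul, ← Complex.ofReal_mul] at h
  have h' := Complex.ofReal_injective h
  have hG : Real.Gamma (a + b) ≠ 0 := (Real.Gamma_pos_of_pos (by linarith)).ne'
  field_simp
  linarith [h']

open Set in
lemma int_Ioi_beta {a b : ℝ} (ha : 0 < a) (hb : 0 < b) :
    ∫ y in Set.Ioi (0:ℝ), y ^ (a - 1) * (1 + y) ^ (-(a + b))
      = Real.Gamma a * Real.Gamma b / Real.Gamma (a + b) := by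
  set f : ℝ → ℝ := fun t => t / (1 - t) with hf
  have himg : f '' Set.Ioo 0 1 = Set.Ioi (0:ℝ) := by
    ext y
    simp only [Set.mem_image, Set.mem_Ioo, Set.mem_Ioi]
    constructor
    · rintro ⟨t, ht, rfl⟩
      exact div_pos ht.1 (by linarith [ht.2])
    · intro hy
      have h1 : (0:ℝ) < 1 + y := by linarith
      refine ⟨y / (1 + y), ⟨div_pos hy h1, by rw [div_lt_one h1]; linarith⟩, ?_⟩
      simp only [hf]
      field_simp; ring
  have hderiv : ∀ t ∈ Set.Ioo (0:ℝ) 1, HasDerivWithinAt f (((1 - t) ^ 2)⁻¹) (Set.Ioo 0 1) t := by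
    intro t ht
    have hne : (1 : ℝ) - t ≠ 0 := by have := ht.2; intro h; simp only [Set.mem_Ioo] at ht; linarith [sub_eq_zero.mp h]
    have := (hasDerivAt_id t).div ((hasDerivAt_id t).const_sub 1) hne
    have e : ((1 - t) ^ 2)⁻¹ = (1 * (1 - id t) - id t * -1) / (1 - id t) ^ 2 := by
      simp only [id]; ring
    rw [e]
    exact this.hasDerivWithinAt
  have hinj : Set.InjOn f (Set.Ioo 0 1) := by
    intro s hs t ht hst
    simp only [hf] at hst
    have h1 : (1:ℝ) - s ≠ 0 := by simp only [Set.mem_Ioo] at hs; intro h; linarith [sub_eq_zero.mp h]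
    have h2 : (1:ℝ) - t ≠ 0 := by simp only [Set.mem_Ioo] at ht; intro h; linarith [sub_eq_zero.mp h]
    field_simp at hst
    linarith
  have key := integral_image_eq_integral_abs_deriv_smul measurableSet_Ioo hderiv hinj
    (fun y => y ^ (a - 1) * (1 + y) ^ (-(a + b)))
  rw [himg] at key
  rw [key]
  have hcong : ∀ t ∈ Set.Ioo (0:ℝ) 1,
      |((1 - t) ^ 2)⁻¹| • (f t ^ (a - 1) * (1 + f t) ^ (-(a + b)))
        = t ^ (a - 1) * (1 - t) ^ (b - 1) := by
    intro t ht
    simp only [Set.mem_Ioo] at ht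
    have h1t : (0:ℝ) < 1 - t := by linarith
    have hfe : 1 + f t = (1 - t)⁻¹ := by simp only [hf]; field_simp; ring
    simp only [hf, smul_eq_mul]
    have e1 : (t / (1 - t)) ^ (a - 1) = t ^ (a - 1) * (1 - t) ^ (1 - a) := by
      rw [Real.div_rpow ht.1.le h1t.le, div_eq_mul_inv, ← Real.rpow_neg h1t.le]
      norm_num
    have e2 : ((1 - t)⁻¹) ^ (-(a + b)) = (1 - t) ^ (a + b) := by
      rw [Real.inv_rpow h1t.le, ← Real.rpow_neg h1t.le, neg_neg]
    have e3 : ((1 - t) ^ 2)⁻¹ = (1 - t) ^ (-2 : ℝ) := by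
      rw [← Real.rpow_natCast (1 - t) 2, ← Real.rpow_neg h1t.le]
      norm_num
    rw [hfe, abs_of_pos (by positivity), e1, e2, e3]
    calc (1 - t) ^ (-2:ℝ) * (t ^ (a-1) * (1 - t) ^ (1-a) * (1 - t) ^ (a+b))
        = t ^ (a-1) * ((1 - t) ^ (-2:ℝ) * (1 - t) ^ (1-a) * (1 - t) ^ (a+b)) := by ring
      _ = t ^ (a-1) * (1 - t) ^ (-2 + (1-a) + (a+b)) := by
          rw [← Real.rpow_add h1t, ← Real.rpow_add h1t]
      _ = t ^ (a-1) * (1 - t) ^ (b-1) := by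
          rw [show (-2:ℝ) + (1-a) + (a+b) = b - 1 by ring]
  rw [setIntegral_congr_fun measurableSet_Ioo hcong,
    ← MeasureTheory.integral_Ioc_eq_integral_Ioo,
    ← intervalIntegral.integral_of_le (by norm_num : (0:ℝ) ≤ 1)]
  exact beta_real ha hb

/-- Gamma-function settling-time identity: for `M, N, m, n', k > 0` with
`k·m < 1`, `k·n' > 1` and `m < n'`,
`∫₀^∞ dv/(M v^m + N v^{n'})^k
  = (M/N)^{(1−km)/(n'−m)} Γ((1−km)/(n'−m)) Γ((kn'−1)/(n'−m)) / (M^k Γ(k) (n'−m))`. -/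
theorem settling_time_gamma (M N m n' k : ℝ)
    (hM : 0 < M) (hN : 0 < N) (hm : 0 < m) (hn' : 0 < n') (hk : 0 < k)
    (hkm : k * m < 1) (hkn : 1 < k * n') (hmn : m < n') :
    ∫ v in Set.Ioi (0 : ℝ), ((M * v ^ m + N * v ^ n') ^ k)⁻¹ =
      (M / N) ^ ((1 - k * m) / (n' - m)) *
        Real.Gamma ((1 - k * m) / (n' - m)) * Real.Gamma ((k * n' - 1) / (n' - m)) /
        (M ^ k * Real.Gamma k * (n' - m)) := by
  have hmn' : 0 < n' - m := by linarith
  set p : ℝ := (n' - m)⁻¹ with hpdef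
  have hp : 0 < p := inv_pos.mpr hmn'
  set a : ℝ := (1 - k * m) / (n' - m) with hadef
  set b : ℝ := (k * n' - 1) / (n' - m) with hbdef
  have ha : 0 < a := div_pos (by linarith) hmn'
  have hb : 0 < b := div_pos (by linarith) hmn'
  have hab : a + b = k := by
    rw [hadef, hbdef, ← add_div, div_eq_iff hmn'.ne']; ring
  set c : ℝ := N / M with hcdef
  have hc : 0 < c := div_pos hN hM
  -- step 1: substitution v = x ^ p
  have E1 : (∫ v in Set.Ioi (0:ℝ), ((M * v ^ m + N * v ^ n') ^ k)⁻¹)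
      = ∫ x in Set.Ioi (0:ℝ), (|p| * x ^ (p - 1)) •
          ((M * (x ^ p) ^ m + N * (x ^ p) ^ n') ^ k)⁻¹ :=
    (integral_comp_rpow_Ioi (fun v => ((M * v ^ m + N * v ^ n') ^ k)⁻¹) hp.ne').symm
  -- step 2: pointwise simplification
  have E2 : ∀ x ∈ Set.Ioi (0:ℝ), (|p| * x ^ (p - 1)) •
        ((M * (x ^ p) ^ m + N * (x ^ p) ^ n') ^ k)⁻¹
      = (M ^ k)⁻¹ * p * (x ^ (a - 1) * (1 + c * x) ^ (-k)) := by
    intro x hx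
    have hx0 : (0:ℝ) < x := hx
    have hv : (0:ℝ) < x ^ p := Real.rpow_pos_of_pos hx0 p
    have h1cx : (0:ℝ) < 1 + c * x := by positivity
    have hxm : (x ^ p) ^ m = x ^ (p * m) := (Real.rpow_mul hx0.le p m).symm
    have hxn : (x ^ p) ^ n' = x ^ (p * n') := (Real.rpow_mul hx0.le p n').symm
    have hsum : M * (x ^ p) ^ m + N * (x ^ p) ^ n'
        = M * x ^ (p * m) * (1 + c * x) := by
      rw [hxm, hxn, show p * n' = p * m + 1 by
        rw [hpdef]; field_simp; ring]
      rw [Real.rpow_add hx0, Real.rpow_one]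
      rw [hcdef]; field_simp
    have hpow : (M * x ^ (p * m) * (1 + c * x)) ^ k
        = M ^ k * x ^ (p * m * k) * (1 + c * x) ^ k := by
      rw [Real.mul_rpow (by positivity) h1cx.le, Real.mul_rpow hM.le (by positivity),
        ← Real.rpow_mul hx0.le]
    rw [hsum, hpow, smul_eq_mul, abs_of_pos hp]
    rw [mul_inv, mul_inv, ← Real.rpow_neg hx0.le, ← Real.rpow_neg h1cx.le]
    have hexp : p - 1 + -(p * m * k) = a - 1 := by
      rw [hadef, hpdef]; field_simp; ring
    rw [show p * x ^ (p - 1) * ((M ^ k)⁻¹ * x ^ (-(p * m * k)) * (1 + c * x) ^ (-k))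
        = (M ^ k)⁻¹ * p * (x ^ (p - 1) * x ^ (-(p * m * k)) * (1 + c * x) ^ (-k)) by ring,
      ← Real.rpow_add hx0, hexp]
  -- step 3: scaling x = c⁻¹ * y
  have E4 : (∫ x in Set.Ioi (0:ℝ), x ^ (a - 1) * (1 + c * x) ^ (-k))
      = c ^ (-a) * ∫ y in Set.Ioi (0:ℝ), y ^ (a - 1) * (1 + y) ^ (-k) := by
    have h1 : ∀ x ∈ Set.Ioi (0:ℝ), x ^ (a - 1) * (1 + c * x) ^ (-k)
        = c ^ (-(a - 1)) * ((c * x) ^ (a - 1) * (1 + c * x) ^ (-k)) := by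
      intro x hx
      have hx0 : (0:ℝ) < x := hx
      rw [Real.mul_rpow hc.le hx0.le, ← mul_assoc, ← mul_assoc,
        ← Real.rpow_add hc, neg_add_cancel, Real.rpow_zero, one_mul]
    rw [setIntegral_congr_fun measurableSet_Ioi h1, MeasureTheory.integral_const_mul,
      integral_comp_mul_left_Ioi (fun y => y ^ (a - 1) * (1 + y) ^ (-k)) 0 hc,
      mul_zero, smul_eq_mul, ← mul_assoc, ← Real.rpow_neg_one c, ← Real.rpow_add hc,
      show -(a - 1) + -1 = -a by ring]
  rw [E1, setIntegral_congr_fun measurableSet_Ioi E2, MeasureTheory.integral_const_mul, E4,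
    show -k = -(a + b) by rw [hab], int_Ioi_beta ha hb, hab]
  have hgk : (0:ℝ) < Real.Gamma k := Real.Gamma_pos_of_pos hk
  have hMN : (M / N) ^ a = (c ^ a)⁻¹ := by
    rw [hcdef, ← Real.inv_rpow (div_pos hN hM).le, inv_div]
  rw [Real.rpow_neg hc.le, hMN, hpdef]
  have hMk : (0:ℝ) < M ^ k := Real.rpow_pos_of_pos hM k
  have hca : (0:ℝ) < c ^ a := Real.rpow_pos_of_pos hc a
  field_simp
end
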